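/- arXiv:1112.5073 — 3 statements merged into one kernel-verified Lean document; each statement's English description precedes it below -/
import Mathlib

section
/- Let T²₁₁ be ℤ³ with the bilinear form given by the Gram matrix [[6,-2,-2],[-2,8,-3],[-2,-3,8]], and write Q(x) = (x,x). Then: (i) the minimal value of Q over nonzero vectors x ∈ ℤ³ is 6; (ii) there is no primitive vector x ∈ ℤ³ with Q(x) ∈ {12, 14, 16, 20}; (iii) there exists a primitive vector f ∈ ℤ³ of divisor 2 (i.e., (f,y) ∈ 2ℤ for all y ∈ ℤ³) with Q(f) = 6, and 6 is the minimal value of Q over such vectors. -/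
open Matrix

/-!
Completing the square gives `3 Q(a, b, c) = 2 (3a - b - c)² + 22 (b² - bc + c²)`.
If `(b, c) ≠ 0` the second term is at least `22`, so `Q ≥ 8`; otherwise `Q = 6a²`. Hence the
minimum is `6`, attained at `e₀ = (1, 0, 0)`, which is primitive and of divisor `2` since
`(e₀, y) = 2 (3y₀ - y₁ - y₂)`. Modulo `11` the identity says that `3Q` is twice a square, while
`3 · 12, 3 · 14, 3 · 16, 3 · 20` are not, so these values are not represented.
-/

/-- The Gram matrix of `T²₁₁`. -/
def T2 : Matrix (Fin 3) (Fin 3) ℤ := !![6, -2, -2; -2, 8, -3; -2, -3, 8]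

/-- The bilinear form of `T²₁₁`. -/
def bil (x y : Fin 3 → ℤ) : ℤ := x ⬝ᵥ T2.mulVec y

/-- The quadratic form `Q(x) = (x, x)` of `T²₁₁`. -/
def Q (x : Fin 3 → ℤ) : ℤ := bil x x

/-- `x` is primitive: the gcd of its coordinates is `1`. -/
def IsPrimitiveVec (x : Fin 3 → ℤ) : Prop :=
  Int.gcd (Int.gcd (x 0) (x 1)) (x 2) = 1

/-- `x` has divisor `2`: `(x, y) ∈ 2ℤ` for all `y ∈ ℤ³`. -/
def HasDivisorTwo (x : Fin 3 → ℤ) : Prop := ∀ y : Fin 3 → ℤ, 2 ∣ bil x y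

lemma bil_apply (x y : Fin 3 → ℤ) : bil x y =
    6 * x 0 * y 0 - 2 * x 0 * y 1 - 2 * x 0 * y 2 - 2 * x 1 * y 0 + 8 * x 1 * y 1
      - 3 * x 1 * y 2 - 2 * x 2 * y 0 - 3 * x 2 * y 1 + 8 * x 2 * y 2 := by
  simp only [bil, dotProduct, mulVec, T2, of_apply, cons_val', cons_val_fin_one,
    Fin.sum_univ_three, cons_val_zero, cons_val_one, cons_val]
  ring

lemma three_mul_Q (x : Fin 3 → ℤ) :
    3 * Q x = 2 * (3 * x 0 - x 1 - x 2) ^ 2 + 22 * (x 1 ^ 2 - x 1 * x 2 + x 2 ^ 2) := by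
  rw [Q, bil_apply]
  ring

lemma Int.one_le_sq_sub_mul_add_sq {b c : ℤ} (h : b ≠ 0 ∨ c ≠ 0) :
    1 ≤ b ^ 2 - b * c + c ^ 2 := by
  have : 0 < b ^ 2 - b * c + c ^ 2 := by
    rcases h with h | h
    · nlinarith [sq_nonneg (b - 2 * c), sq_pos_of_ne_zero h]
    · nlinarith [sq_nonneg (2 * b - c), sq_pos_of_ne_zero h]
  omega

lemma six_le_Q {x : Fin 3 → ℤ} (hx : x ≠ 0) : 6 ≤ Q x := by
  have h3Q := three_mul_Q x
  by_cases htail : x 1 = 0 ∧ x 2 = 0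
  · obtain ⟨h1, h2⟩ := htail
    have h0 : x 0 ≠ 0 := fun h0 => hx (funext fun i => by fin_cases i <;> assumption)
    rw [h1, h2] at h3Q
    nlinarith [sq_pos_of_ne_zero h0]
  · have := Int.one_le_sq_sub_mul_add_sq (not_and_or.mp htail)
    nlinarith [sq_nonneg (3 * x 0 - x 1 - x 2)]

lemma Q_ne_of_forall_zmod_eleven {q : ℤ} (hq : ∀ u : ZMod 11, ((3 * q : ℤ) : ZMod 11) ≠ 2 * u ^ 2)
    (x : Fin 3 → ℤ) : Q x ≠ q := by
  rintro rfl
  apply hq ((3 * x 0 - x 1 - x 2 : ℤ) : ZMod 11)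
  rw [three_mul_Q]
  push_cast
  rw [show (22 : ZMod 11) = 0 from rfl]
  ring

lemma IsPrimitiveVec.ne_zero {x : Fin 3 → ℤ} (hx : IsPrimitiveVec x) : x ≠ 0 := by
  rintro rfl
  simp [IsPrimitiveVec] at hx

lemma isPrimitiveVec_e₀ : IsPrimitiveVec ![1, 0, 0] := by
  simp [IsPrimitiveVec]

lemma hasDivisorTwo_e₀ : HasDivisorTwo ![1, 0, 0] :=
  fun y => ⟨3 * y 0 - y 1 - y 2, by simp [bil_apply]; ring⟩

lemma Q_e₀ : Q ![1, 0, 0] = 6 := by decide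

/-- (i) the least square of a nonzero vector of `T²₁₁` is `6`;
(ii) `T²₁₁` contains no primitive vector of square `12`, `14`, `16` or `20`;
(iii) the least square of a primitive vector of divisor `2` in `T²₁₁`
is `6`. -/
theorem T2_polarizations :
    IsLeast {q : ℤ | ∃ x : Fin 3 → ℤ, x ≠ 0 ∧ Q x = q} 6 ∧
    (¬ ∃ x : Fin 3 → ℤ, IsPrimitiveVec x ∧
      (Q x = 12 ∨ Q x = 14 ∨ Q x = 16 ∨ Q x = 20)) ∧
    IsLeast {q : ℤ | ∃ f : Fin 3 → ℤ, IsPrimitiveVec f ∧ HasDivisorTwo f ∧ Q f = q}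
      6 := by
  refine ⟨⟨⟨_, isPrimitiveVec_e₀.ne_zero, Q_e₀⟩, ?_⟩, ?_,
    ⟨⟨_, isPrimitiveVec_e₀, hasDivisorTwo_e₀, Q_e₀⟩, ?_⟩⟩
  · rintro _ ⟨x, hx, rfl⟩
    exact six_le_Q hx
  · rintro ⟨x, -, h | h | h | h⟩ <;> exact Q_ne_of_forall_zmod_eleven (by decide) x h
  · rintro _ ⟨f, hf, -, rfl⟩
    exact six_le_Q hf.ne_zero
end

section
/- Let T²₁₁ be ℤ³ with the bilinear form given by the Gram matrix [[6,-2,-2],[-2,8,-3],[-2,-3,8]], and let a = (1,0,0) (a vector with (a,a) = 6 and divisor 2). Then the orthogonal complement {x ∈ ℤ³ : (x, a) = 0}, with the restricted bilinear form, is isometric to the rank 2 lattice with Gram matrix [[22,33],[33,66]]; that is, it has a ℤ-basis u, v with (u,u) = 22, (u,v) = 33, (v,v) = 66. -/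
open Matrix

/-- The polarization vector `a = (1,0,0)`, of square `6` and divisor `2`. -/
def a : Fin 3 → ℤ := ![1, 0, 0]

/-- The orthogonal complement `{x ∈ ℤ³ : (x, a) = 0}` of `a` in `T²₁₁` has a
`ℤ`-basis `u, v` with `(u,u) = 22`, `(u,v) = 33`, `(v,v) = 66`; i.e. it is
isometric to the rank 2 lattice with Gram matrix `[[22,33],[33,66]]`. -/
theorem orthogonal_complement_of_polarization :
    ∃ u v : Fin 3 → ℤ,
      bil u a = 0 ∧ bil v a = 0 ∧
      bil u u = 22 ∧ bil u v = 33 ∧ bil v v = 66 ∧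
      (∀ m n : ℤ, m • u + n • v = 0 → m = 0 ∧ n = 0) ∧
      (∀ x : Fin 3 → ℤ, bil x a = 0 → ∃ m n : ℤ, x = m • u + n • v) := by
  refine ⟨![0, 1, -1], ![-1, 0, -3], by decide, by decide, by decide, by decide, by decide,
    ?_, ?_⟩
  · intro m n h
    have h0 := congrFun h 0
    have h1 := congrFun h 1
    simp [Matrix.cons_val_zero, Matrix.cons_val_one] at h0 h1
    omega
  · intro x hx
    have hx' : 6 * x 0 - 2 * x 1 - 2 * x 2 = 0 := by
      have := hx; simp [bil, T2, a, mulVec, dotProduct, Fin.sum_univ_succ] at this; omega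
    refine ⟨x 1, -(x 0), ?_⟩
    funext i
    fin_cases i <;> simp <;> omega
end

section
/- Let ω = e^{2πi/11}, let ψ : ℂ⁶ → ℂ⁶ be the diagonal linear map with eigenvalues (1, ω, ω³, ω⁴, ω⁵, ω⁹) on the standard basis e₀, ..., e₅, and let h = x₀³ + x₁²x₅ + x₂²x₄ + x₃²x₂ + x₄²x₁ + x₅²x₃. Then for a nonzero vector v ∈ ℂ⁶ with h(v) = 0, the following are equivalent: (a) v is an eigenvector of ψ (i.e., ψ(v) = λv for some λ ∈ ℂ); (b) v is a nonzero scalar multiple of one of e₁, e₂, e₃, e₄, e₅. In other words, the fixed points of the induced automorphism of the Klein cubic fourfold X_Kl = V(h) ⊂ ℙ⁵ are exactly the five coordinate points [e₁], [e₂], [e₃], [e₄], [e₅]. -/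
open MvPolynomial

/-!
Since `ψ` is diagonal with pairwise distinct eigenvalues (the exponents `0, 1, 3, 4, 5, 9` are
distinct modulo `11`), its eigenvectors are exactly the nonzero multiples of the basis vectors.
Of these, `h` vanishes on `e₁, …, e₅` but not on `e₀`, where it takes the value `1`.
-/

/-- `ω = e^{2πi/11}`, a primitive 11-th root of unity. -/
noncomputable def ω : ℂ := Complex.exp (2 * Real.pi * Complex.I / 11)

/-- The diagonal linear map `ψ : ℂ⁶ → ℂ⁶` with eigenvalues
`(1, ω, ω³, ω⁴, ω⁵, ω⁹)`. -/
noncomputable def ψ (v : Fin 6 → ℂ) : Fin 6 → ℂ :=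
  fun i => ![1, ω, ω ^ 3, ω ^ 4, ω ^ 5, ω ^ 9] i * v i

/-- The defining polynomial `h` of the Klein cubic fourfold `X_Kl ⊂ ℙ⁵`. -/
noncomputable def klein : MvPolynomial (Fin 6) ℂ :=
  X 0 ^ 3 + X 1 ^ 2 * X 5 + X 2 ^ 2 * X 4 + X 3 ^ 2 * X 2 +
    X 4 ^ 2 * X 1 + X 5 ^ 2 * X 3

section DiagonalEigenvectors

variable {ι M₀ : Type*} [DecidableEq ι] [MonoidWithZero M₀]

theorem mul_smul_single (d : ι → M₀) (c : M₀) (j : ι) :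
    d * (c • Pi.single j 1) = d j • (c • Pi.single j 1) := by
  funext i
  by_cases hij : i = j
  · subst hij
    simp
  · simp [hij]

variable [IsRightCancelMulZero M₀]

theorem eq_smul_single_of_mul_eq_smul {d : ι → M₀} (hd : Function.Injective d) {v : ι → M₀}
    {l : M₀} (hl : d * v = l • v) {j : ι} (hj : v j ≠ 0) : v = v j • Pi.single j 1 := by
  have hlj : l = d j := (mul_right_cancel₀ hj (congrFun hl j)).symm
  funext i
  by_cases hij : i = j
  · subst hij
    simp
  · have hvi : v i = 0 := by
      by_contra hvi
      exact hij (hd (by rw [mul_right_cancel₀ hvi (congrFun hl i), hlj]))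
    simp [hij, hvi]

theorem exists_mul_eq_smul_iff {d : ι → M₀} (hd : Function.Injective d) {v : ι → M₀}
    (hv : v ≠ 0) : (∃ l : M₀, d * v = l • v) ↔ ∃ j, ∃ c : M₀, c ≠ 0 ∧ v = c • Pi.single j 1 := by
  constructor
  · rintro ⟨l, hl⟩
    obtain ⟨j, hj⟩ := Function.ne_iff.mp hv
    exact ⟨j, v j, hj, eq_smul_single_of_mul_eq_smul hd hl hj⟩
  · rintro ⟨j, c, -, rfl⟩
    exact ⟨d j, mul_smul_single d c j⟩

end DiagonalEigenvectors

theorem IsPrimitiveRoot.injective_pow_comp {ι M : Type*} [CommMonoid M] {ζ : M} {n : ℕ}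
    (hζ : IsPrimitiveRoot ζ n) {e : ι → ℕ} (he : Function.Injective e) (hlt : ∀ i, e i < n) :
    Function.Injective fun i => ζ ^ e i :=
  fun _ _ hij => he (hζ.pow_inj (hlt _) (hlt _) hij)

theorem isPrimitiveRoot_ω : IsPrimitiveRoot ω 11 := by
  simpa [ω] using Complex.isPrimitiveRoot_exp 11 (by norm_num)

theorem ψ_eq_mul (v : Fin 6 → ℂ) : ψ v = ![1, ω, ω ^ 3, ω ^ 4, ω ^ 5, ω ^ 9] * v := rfl

theorem injective_ψ_eigenvalues : Function.Injective ![1, ω, ω ^ 3, ω ^ 4, ω ^ 5, ω ^ 9] := by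
  have hpow : ![1, ω, ω ^ 3, ω ^ 4, ω ^ 5, ω ^ 9] = fun i => ω ^ ![0, 1, 3, 4, 5, 9] i := by
    funext i
    fin_cases i <;> simp
  rw [hpow]
  exact isPrimitiveRoot_ω.injective_pow_comp (by decide) (by decide)

theorem eval_smul_single_zero_klein (c : ℂ) :
    eval (c • Pi.single 0 1) klein = c ^ 3 := by
  simp [klein]

/-- A nonzero vector `v ∈ ℂ⁶` with `h(v) = 0` is an eigenvector of `ψ` if and
only if it is a nonzero scalar multiple of one of `e₁, e₂, e₃, e₄, e₅`:  the
fixed points of the induced automorphism of `X_Kl` are exactly the five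
coordinate points `[e₁], …, [e₅]`. -/
theorem klein_fixed_points (v : Fin 6 → ℂ) (hv : v ≠ 0)
    (hvX : eval v klein = 0) :
    (∃ l : ℂ, ψ v = l • v) ↔
      ∃ i : Fin 6, i ≠ 0 ∧ ∃ c : ℂ, c ≠ 0 ∧ v = c • (Pi.single i 1 : Fin 6 → ℂ) := by
  rw [funext ψ_eq_mul, exists_mul_eq_smul_iff injective_ψ_eigenvalues hv]
  constructor
  · rintro ⟨i, c, hc, rfl⟩
    refine ⟨i, ?_, c, hc, rfl⟩
    rintro rfl
    rw [eval_smul_single_zero_klein] at hvX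
    exact hc (pow_eq_zero_iff three_ne_zero |>.mp hvX)
  · rintro ⟨i, -, c, hc, rfl⟩
    exact ⟨i, c, hc, rfl⟩
end
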